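/- arXiv:1307.4468 — 2 statements merged into one kernel-verified Lean document; each statement's English description precedes it below -/
import Mathlib

section
/- Let φ be a CTL* formula and let h₀, h₁, ..., h_k be φ-hues with hⱼ r_X hⱼ₊₁ for each j < k and h_k r_X h₀. Let ξ be the infinite periodic sequence with ξ_n = h_(n mod (k+1)). Then ξ is fulfilling (for every i and every αUβ ∈ ξᵢ there is j ≥ i with β ∈ ξⱼ) if and only if for every formula αUβ ∈ h₀ there is some j with 0 ≤ j ≤ k and β ∈ hⱼ. -/
/-- CTL* formulas over a set `L` of atomic propositions, built using
negation, conjunction, and the temporal connectives X (`next`),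
U (`untl`) and A (`all`). -/
inductive Formula (L : Type) : Type
  | atom : L → Formula L
  | neg  : Formula L → Formula L
  | and  : Formula L → Formula L → Formula L
  | next : Formula L → Formula L
  | untl : Formula L → Formula L → Formula L
  | all  : Formula L → Formula L

/-- The set of subformulas of a formula (including the formula itself). -/
def Formula.subf {L : Type} : Formula L → Set (Formula L)
  | .atom p => {.atom p}
  | .neg α => insert (.neg α) α.subf
  | .and α β => insert (.and α β) (α.subf ∪ β.subf)
  | .next α => insert (.next α) α.subf
  | .untl α β => insert (.untl α β) (α.subf ∪ β.subf)
  | .all α => insert (.all α) α.subf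

/-- The closure set `cl φ = {ψ, ¬ψ : ψ a subformula of φ}`. -/
def closureSet {L : Type} (φ : Formula L) : Set (Formula L) :=
  φ.subf ∪ (Formula.neg '' φ.subf)

/-- `a ⊆ cl φ` is maximally propositionally consistent (MPC): (M1) for
`α, β ∈ cl φ`, if `β = ¬α` then `β ∈ a` iff `α ∉ a`; (M2) for `α, β ∈ cl φ`,
if `α∧β ∈ cl φ` then `α∧β ∈ a` iff both `α ∈ a` and `β ∈ a`. -/
def MPC {L : Type} (φ : Formula L) (a : Set (Formula L)) : Prop :=
  (∀ α ∈ closureSet φ, ∀ β ∈ closureSet φ,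
      β = Formula.neg α → (β ∈ a ↔ α ∉ a)) ∧
  (∀ α ∈ closureSet φ, ∀ β ∈ closureSet φ,
      Formula.and α β ∈ closureSet φ → (Formula.and α β ∈ a ↔ α ∈ a ∧ β ∈ a))

/-- `a ⊆ cl φ` is a hue for `φ`: (H1) MPC; (H2) if `αUβ ∈ a` and `β ∉ a` then
`α ∈ a`; (H3) if `αUβ ∈ cl φ \ a` then `β ∉ a`; (H4) if `Aα ∈ a` then `α ∈ a`. -/
def IsHue {L : Type} (φ : Formula L) (a : Set (Formula L)) : Prop :=
  a ⊆ closureSet φ ∧ MPC φ a ∧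
  (∀ α β : Formula L, Formula.untl α β ∈ a → β ∉ a → α ∈ a) ∧
  (∀ α β : Formula L, Formula.untl α β ∈ closureSet φ →
      Formula.untl α β ∉ a → β ∉ a) ∧
  (∀ α : Formula L, Formula.all α ∈ a → α ∈ a)

/-- `a r_X b`: (R1) `Xα ∈ a` implies `α ∈ b`; (R2) `¬Xα ∈ a` implies `¬α ∈ b`;
(R3) `αUβ ∈ a` and `¬β ∈ a` imply `αUβ ∈ b`; (R4) `¬(αUβ) ∈ a` and `α ∈ a`
imply `¬(αUβ) ∈ b`. -/
def rX {L : Type} (a b : Set (Formula L)) : Prop :=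
  (∀ α : Formula L, Formula.next α ∈ a → α ∈ b) ∧
  (∀ α : Formula L, Formula.neg (Formula.next α) ∈ a → Formula.neg α ∈ b) ∧
  (∀ α β : Formula L, Formula.untl α β ∈ a → Formula.neg β ∈ a →
      Formula.untl α β ∈ b) ∧
  (∀ α β : Formula L, Formula.neg (Formula.untl α β) ∈ a → α ∈ a →
      Formula.neg (Formula.untl α β) ∈ b)

lemma Formula.subf_self {L : Type} (φ : Formula L) : φ ∈ φ.subf := by
  cases φ <;> simp [Formula.subf]

lemma Formula.subf_trans {L : Type} (φ ψ : Formula L) (h : ψ ∈ φ.subf) :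
    ψ.subf ⊆ φ.subf := by
  induction φ with
  | atom p => simp [Formula.subf] at h; subst h; exact subset_rfl
  | neg α ih =>
    simp only [Formula.subf, Set.mem_insert_iff] at h
    rcases h with h | h
    · subst h; exact subset_rfl
    · exact (ih h).trans (Set.subset_insert _ _)
  | and α β ih1 ih2 =>
    simp only [Formula.subf, Set.mem_insert_iff, Set.mem_union] at h
    rcases h with h | h | h
    · subst h; exact subset_rfl
    · exact (ih1 h).trans ((Set.subset_union_left).trans (Set.subset_insert _ _))
    · exact (ih2 h).trans ((Set.subset_union_right).trans (Set.subset_insert _ _))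
  | next α ih =>
    simp only [Formula.subf, Set.mem_insert_iff] at h
    rcases h with h | h
    · subst h; exact subset_rfl
    · exact (ih h).trans (Set.subset_insert _ _)
  | untl α β ih1 ih2 =>
    simp only [Formula.subf, Set.mem_insert_iff, Set.mem_union] at h
    rcases h with h | h | h
    · subst h; exact subset_rfl
    · exact (ih1 h).trans ((Set.subset_union_left).trans (Set.subset_insert _ _))
    · exact (ih2 h).trans ((Set.subset_union_right).trans (Set.subset_insert _ _))
  | all α ih =>
    simp only [Formula.subf, Set.mem_insert_iff] at h
    rcases h with h | h
    · subst h; exact subset_rfl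
    · exact (ih h).trans (Set.subset_insert _ _)

/-- If `αUβ ∈ cl φ` then `β ∈ cl φ` and `¬β ∈ cl φ`. -/
lemma untl_closure {L : Type} (φ α β : Formula L)
    (h : Formula.untl α β ∈ closureSet φ) :
    β ∈ closureSet φ ∧ Formula.neg β ∈ closureSet φ := by
  have hsub : Formula.untl α β ∈ φ.subf := by
    rcases h with h | ⟨x, _, hx⟩
    · exact h
    · cases hx
  have hβ : β ∈ φ.subf := by
    apply Formula.subf_trans φ _ hsub
    simp only [Formula.subf, Set.mem_insert_iff, Set.mem_union]
    exact Or.inr (Or.inr (Formula.subf_self β))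
  exact ⟨Or.inl hβ, Or.inr ⟨β, hβ, rfl⟩⟩

/-- For a hue `a`, if `αUβ ∈ a` and `β ∉ a` then `¬β ∈ a`. -/
lemma hue_neg_mem {L : Type} (φ α β : Formula L) (a : Set (Formula L))
    (ha : IsHue φ a) (hU : Formula.untl α β ∈ a) (hβ : β ∉ a) :
    Formula.neg β ∈ a := by
  obtain ⟨hsub, ⟨hM1, _⟩, _⟩ := ha
  obtain ⟨hβc, hnβc⟩ := untl_closure φ α β (hsub hU)
  exact (hM1 β hβc (Formula.neg β) hnβc rfl).mpr hβ

/-- Let `h₀, ..., h_k` be `φ`-hues with `hⱼ r_X hⱼ₊₁` for `j < k`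
and `h_k r_X h₀`, and let `ξ` be the infinite periodic sequence
`ξ_n = h_(n mod (k+1))`. Then `ξ` is fulfilling (every `αUβ ∈ ξᵢ` has some
`j ≥ i` with `β ∈ ξⱼ`) iff every `αUβ ∈ h₀` has some `j ≤ k` with `β ∈ hⱼ`. -/
theorem periodic_thread_fulfilling_iff {L : Type} [Countable L] (φ : Formula L)
    (k : ℕ) (h : ℕ → Set (Formula L))
    (hhue : ∀ j : ℕ, j ≤ k → IsHue φ (h j))
    (hstep : ∀ j : ℕ, j < k → rX (h j) (h (j + 1)))
    (hloop : rX (h k) (h 0))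
    (ξ : ℕ → Set (Formula L)) (hξ : ∀ n : ℕ, ξ n = h (n % (k + 1))) :
    (∀ i : ℕ, ∀ α β : Formula L, Formula.untl α β ∈ ξ i →
        ∃ j : ℕ, i ≤ j ∧ β ∈ ξ j) ↔
    (∀ α β : Formula L, Formula.untl α β ∈ h 0 →
        ∃ j : ℕ, j ≤ k ∧ β ∈ h j) := by
  have hmod : ∀ n : ℕ, n % (k + 1) ≤ k := fun n =>
    Nat.lt_succ_iff.mp (Nat.mod_lt _ k.succ_pos)
  have hξhue : ∀ n : ℕ, IsHue φ (ξ n) := fun n => by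
    rw [hξ n]; exact hhue _ (hmod n)
  -- ξ n r_X ξ (n+1)
  have hξstep : ∀ n : ℕ, rX (ξ n) (ξ (n + 1)) := by
    intro n
    rw [hξ n, hξ (n + 1)]
    have hbase : (n + 1) % (k + 1) = (n % (k + 1) + 1) % (k + 1) := by
      conv_lhs => rw [← Nat.mod_add_mod]
    rcases lt_or_eq_of_le (hmod n) with hlt | heq
    · have : (n + 1) % (k + 1) = n % (k + 1) + 1 := by
        rw [hbase]; exact Nat.mod_eq_of_lt (by omega)
      rw [this]; exact hstep _ hlt
    · have : (n + 1) % (k + 1) = 0 := by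
        rw [hbase, heq]; exact Nat.mod_self (k + 1)
      rw [this, heq]; exact hloop
  -- Propagation: if αUβ ∈ ξ n and β never appears in [n, n+d), then αUβ ∈ ξ (n+d)
  have hprop : ∀ d n : ℕ, ∀ α β : Formula L, Formula.untl α β ∈ ξ n →
      (∀ m : ℕ, n ≤ m → m < n + d → β ∉ ξ m) → Formula.untl α β ∈ ξ (n + d) := by
    intro d
    induction d with
    | zero => intro n α β hU _; exact hU
    | succ d ih =>
      intro n α β hU hno
      have hU' : Formula.untl α β ∈ ξ (n + d) :=
        ih n α β hU (fun m h1 h2 => hno m h1 (by omega))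
      have hβno : β ∉ ξ (n + d) := hno (n + d) (by omega) (by omega)
      have hnβ : Formula.neg β ∈ ξ (n + d) :=
        hue_neg_mem φ α β _ (hξhue (n + d)) hU' hβno
      have := (hξstep (n + d)).2.2.1 α β hU' hnβ
      rwa [show n + (d + 1) = n + d + 1 by omega]
  constructor
  · intro hful α β hU
    obtain ⟨j, _, hβ⟩ := hful 0 α β (by rw [hξ 0]; simpa using hU)
    refine ⟨j % (k + 1), hmod j, ?_⟩
    rwa [hξ j] at hβ
  · intro hwit i α β hU
    by_contra hno
    push_neg at hno
    -- αUβ propagates forever; find a point ≡ 0 mod (k+1) after i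
    set m := (i / (k + 1) + 1) * (k + 1) with hm
    have him : i ≤ m := by
      have := Nat.lt_mul_div_succ i (show 0 < k + 1 by omega)
      have h2 : m = (k + 1) * (i / (k + 1) + 1) := by rw [hm, Nat.mul_comm]
      omega
    have hmmod : m % (k + 1) = 0 := Nat.mul_mod_left _ _
    have hUm : Formula.untl α β ∈ ξ m := by
      have := hprop (m - i) i α β hU
        (fun n h1 _ => hno n h1)
      rwa [Nat.add_sub_cancel' him] at this
    have hU0 : Formula.untl α β ∈ h 0 := by
      rw [hξ m, hmmod] at hUm; exact hUm
    obtain ⟨j, hjk, hβj⟩ := hwit α β hU0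
    refine hno (m + j) (by omega) ?_
    rw [hξ (m + j), Nat.add_mod, hmmod, Nat.zero_add, Nat.mod_mod_of_dvd,
      Nat.mod_eq_of_lt (by omega)]
    · exact hβj
    · exact dvd_rfl
end

section
/- The CTL* formula AFGq ∧ ¬AFAGq is satisfiable: there is a transition structure M and a fullpath σ with M,σ ⊨ AFGq and M,σ ⊭ AFAGq. Consequently AFGq → AFAGq is not valid. -/
/-- A transition structure `M = (S, R, g)`: a nonempty set of states,
a total transition relation, and a labelling of states with sets of atoms. -/
structure TransStruct (L : Type) where
  S : Type
  nonempty : Nonempty S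
  R : S → S → Prop
  total : ∀ s : S, ∃ t : S, R s t
  g : S → Set L

/-- A fullpath: an infinite sequence of states with consecutive states related by `R`. -/
def Fullpath {L : Type} (M : TransStruct L) : Type :=
  { σ : ℕ → M.S // ∀ i : ℕ, M.R (σ i) (σ (i + 1)) }

/-- The suffix `σ≥ᵢ` of a fullpath. -/
def Fullpath.suffix {L : Type} {M : TransStruct L} (σ : Fullpath M) (i : ℕ) :
    Fullpath M :=
  ⟨fun n => σ.1 (n + i), fun n => by
    have h := σ.2 (n + i)
    simpa [Nat.add_right_comm] using h⟩

/-- Truth of a CTL* formula at a fullpath of a transition structure. -/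
def sat {L : Type} (M : TransStruct L) : Formula L → Fullpath M → Prop
  | .atom p, σ => p ∈ M.g (σ.1 0)
  | .neg α, σ => ¬ sat M α σ
  | .and α β, σ => sat M α σ ∧ sat M β σ
  | .next α, σ => sat M α (σ.suffix 1)
  | .untl α β, σ =>
      ∃ i : ℕ, sat M β (σ.suffix i) ∧ ∀ j : ℕ, j < i → sat M α (σ.suffix j)
  | .all α, σ => ∀ σ' : Fullpath M, σ'.1 0 = σ.1 0 → sat M α σ'

/-- A formula is valid iff it is true at every fullpath of every transition structure. -/
def valid {L : Type} (α : Formula L) : Prop :=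
  ∀ (M : TransStruct L) (σ : Fullpath M), sat M α σ

/-- A formula is satisfiable iff it is true at some fullpath of some transition structure. -/
def satisfiable {L : Type} (α : Formula L) : Prop :=
  ∃ (M : TransStruct L) (σ : Fullpath M), sat M α σ

/-- The abbreviation `true`, here rendered (relative to the atom `q`) as the
tautology `¬(q ∧ ¬q)`. -/
def tru {L : Type} (q : L) : Formula L :=
  .neg (.and (.atom q) (.neg (.atom q)))

/-- `Fα ≡ true U α`. -/
def Fm {L : Type} (q : L) (α : Formula L) : Formula L := .untl (tru q) α

/-- `Gα ≡ ¬F¬α`. -/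
def Gm {L : Type} (q : L) (α : Formula L) : Formula L := .neg (Fm q (.neg α))

/-- `Eα ≡ ¬A¬α`. -/
def Em {L : Type} (α : Formula L) : Formula L := .neg (.all (.neg α))

/-- `α → β`, defined classically as `¬(α ∧ ¬β)`. -/
def Impl {L : Type} (α β : Formula L) : Formula L := .neg (.and α (.neg β))

section Aux

/-- The counterexample transition structure: three states `0,1,2` (over `Fin 3`),
with `q` holding at `0` and `2` but not `1`; transitions `0→0`, `0→1`, and
everything `→2`. -/
@[reducible] def Mdl (L : Type) (q : L) : TransStruct L where
  S := Fin 3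
  nonempty := ⟨0⟩
  R a b := b = 2 ∨ (a = 0 ∧ (b = 0 ∨ b = 1))
  total _ := ⟨2, Or.inl rfl⟩
  g s := if s = 1 then (∅ : Set L) else {q}

lemma suffix_apply {L : Type} {M : TransStruct L} (σ : Fullpath M) (i n : ℕ) :
    (σ.suffix i).1 n = σ.1 (n + i) := rfl

lemma sat_tru {L : Type} (M : TransStruct L) (q : L) (σ : Fullpath M) :
    sat M (tru q) σ := by
  simp [tru, sat]

lemma sat_Fm {L : Type} (M : TransStruct L) (q : L) (α : Formula L)
    (σ : Fullpath M) :
    sat M (Fm q α) σ ↔ ∃ i, sat M α (σ.suffix i) := by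
  constructor
  · rintro ⟨i, h, -⟩; exact ⟨i, h⟩
  · rintro ⟨i, h⟩; exact ⟨i, h, fun j _ => sat_tru M q _⟩

lemma sat_Gm {L : Type} (M : TransStruct L) (q : L) (α : Formula L)
    (σ : Fullpath M) :
    sat M (Gm q α) σ ↔ ∀ i, sat M α (σ.suffix i) := by
  show ¬ sat M (Fm q (.neg α)) σ ↔ _
  rw [sat_Fm]
  push_neg
  constructor
  · intro h i
    by_contra hc
    exact h i hc
  · intro h i
    exact fun hc => hc (h i)

lemma mem_g_Mdl {L : Type} (q : L) (s : Fin 3) :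
    q ∈ (Mdl L q).g s ↔ s ≠ 1 := by
  show q ∈ (if s = 1 then (∅ : Set L) else {q}) ↔ s ≠ 1
  by_cases h : s = 1 <;> simp [h]

/-- Once off state `0`, a path is at `2` forever after. -/
lemma path_stuck {L : Type} (q : L) (σ : Fullpath (Mdl L q)) (j : ℕ)
    (h : σ.1 j ≠ 0) : ∀ k, σ.1 (j + 1 + k) = (2 : Fin 3) := by
  intro k
  induction k with
  | zero =>
      rcases σ.2 j with h2 | ⟨h0, -⟩
      · exact h2
      · exact absurd h0 h
  | succ n ih =>
      rcases σ.2 (j + 1 + n) with h2 | ⟨h0, -⟩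
      · exact h2
      · rw [ih] at h0; exact absurd h0 (by decide)

/-- Every path eventually avoids state `1` forever. -/
lemma path_ev {L : Type} (q : L) (σ : Fullpath (Mdl L q)) :
    ∃ i, ∀ k, σ.1 (k + i) ≠ (1 : Fin 3) := by
  by_cases h : ∃ j, σ.1 j ≠ (0 : Fin 3)
  · obtain ⟨j, hj⟩ := h
    refine ⟨j + 1, fun k => ?_⟩
    have := path_stuck q σ j hj k
    rw [Nat.add_comm] at this
    rw [this]; exact (by decide : (2 : Fin 3) ≠ 1)
  · push_neg at h
    exact ⟨0, fun k => by rw [h]; exact (by decide : (0 : Fin 3) ≠ 1)⟩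

end Aux

/-- The CTL* formula `AFGq ∧ ¬AFAGq` is satisfiable: there are a
transition structure `M` and a fullpath `σ` with `M,σ ⊨ AFGq` and
`M,σ ⊭ AFAGq`. Consequently `AFGq → AFAGq` is not valid. -/
theorem satisfiable_AFGq_not_AFAGq {L : Type} [Countable L] (q : L) :
    (∃ (M : TransStruct L) (σ : Fullpath M),
        sat M (.all (Fm q (Gm q (.atom q)))) σ ∧
        ¬ sat M (.all (Fm q (.all (Gm q (.atom q))))) σ) ∧
    ¬ valid (Impl (.all (Fm q (Gm q (.atom q))))
                 (.all (Fm q (.all (Gm q (.atom q)))))) := by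
  classical
  -- the constant-0 path
  let σ0 : Fullpath (Mdl L q) := ⟨fun _ => (0 : Fin 3), fun _ => Or.inr ⟨rfl, Or.inl rfl⟩⟩
  -- a "bad" path 0,1,2,2,2,... from 0
  let σbad : Fullpath (Mdl L q) :=
    ⟨fun n => if n = 0 then (0 : Fin 3) else if n = 1 then 1 else 2,
    by
      intro i
      match i with
      | 0 => exact Or.inr ⟨rfl, Or.inr rfl⟩
      | 1 => exact Or.inl rfl
      | (n+2) => exact Or.inl rfl⟩
  -- Part 1: AFGq holds at σ0
  have hA : sat (Mdl L q) (.all (Fm q (Gm q (.atom q)))) σ0 := by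
    intro σ' _
    rw [sat_Fm]
    obtain ⟨i, hi⟩ := path_ev q σ'
    refine ⟨i, ?_⟩
    rw [sat_Gm]
    intro k
    show q ∈ (Mdl L q).g (((σ'.suffix i).suffix k).1 0)
    rw [suffix_apply, suffix_apply, Nat.zero_add, mem_g_Mdl]
    exact hi k
  -- Part 2: AFAGq fails at σ0
  have hB : ¬ sat (Mdl L q) (.all (Fm q (.all (Gm q (.atom q))))) σ0 := by
    intro h
    have h0 := h σ0 rfl
    rw [sat_Fm] at h0
    obtain ⟨i, hi⟩ := h0
    -- (σ0.suffix i) starts at 0, so σbad is a path from the same state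
    have hb := hi σbad (by rfl)
    rw [sat_Gm] at hb
    have h1 := hb 1
    have hmem : q ∈ (Mdl L q).g (1 : Fin 3) := h1
    rw [mem_g_Mdl] at hmem
    exact hmem rfl
  refine ⟨⟨Mdl L q, σ0, hA, hB⟩, ?_⟩
  intro hv
  exact hv (Mdl L q) σ0 ⟨hA, hB⟩
end
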